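/- Let H ∈ ℂ^{N×N} and let T be a unitary matrix such that T H T* = Λ is upper triangular with diagonal entries λ₁,...,λ_N (Schur decomposition). Then the linear system ẋ = (I_N ⊗ A − H ⊗ BK) x is asymptotically stable if and only if each of the N systems ẋᵢ = (A − λᵢ BK) xᵢ, i = 1,...,N, is asymptotically stable; equivalently, I_N ⊗ A − H ⊗ BK is Hurwitz iff A − λᵢ BK is Hurwitz for each eigenvalue λᵢ of H. -/
import Mathlib


open Matrix

lemma spec_iff_det_aux {ι : Type*} [Fintype ι] [DecidableEq ι] (M : Matrix ι ι ℂ) (μ : ℂ) :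
    μ ∈ spectrum ℂ M ↔ ((μ • (1 : Matrix ι ι ℂ)) - M).det = 0 := by
  rw [spectrum.mem_iff, Algebra.algebraMap_eq_smul_one, Matrix.isUnit_iff_isUnit_det,
    isUnit_iff_ne_zero, not_not]

/-- let `T` be unitary with `T H T* = Λ` upper triangular (Schur
decomposition), with diagonal entries `λ₁,…,λ_N` (the eigenvalues of `H`).  Then
`I_N ⊗ A − H ⊗ (B K)` is Hurwitz iff each `A − λᵢ B K` is Hurwitz; this expresses that
the system `ẋ = (I_N ⊗ A − H ⊗ B K) x` is asymptotically stable iff each of the `N`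
systems `ẋᵢ = (A − λᵢ B K) xᵢ` is asymptotically stable. -/
theorem kronecker_hurwitz_iff_schur {N n m : ℕ}
    (A : Matrix (Fin n) (Fin n) ℝ) (B : Matrix (Fin n) (Fin m) ℝ) (K : Matrix (Fin m) (Fin n) ℝ)
    (H : Matrix (Fin N) (Fin N) ℂ) (T : Matrix (Fin N) (Fin N) ℂ)
    (hT : T ∈ Matrix.unitaryGroup (Fin N) ℂ)
    (hTri : (T * H * T.conjTranspose).BlockTriangular id) :
    (∀ μ ∈ spectrum ℂ
        (Matrix.kroneckerMap (· * ·) (1 : Matrix (Fin N) (Fin N) ℂ) (A.map Complex.ofReal)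
          - Matrix.kroneckerMap (· * ·) H ((B * K).map Complex.ofReal)),
      μ.re < 0)
    ↔ (∀ i : Fin N, ∀ μ ∈ spectrum ℂ
        ((A.map Complex.ofReal)
          - ((T * H * T.conjTranspose) i i) • ((B * K).map Complex.ofReal)),
        μ.re < 0) := by
  set A' : Matrix (Fin n) (Fin n) ℂ := A.map Complex.ofReal with hA'
  set C : Matrix (Fin n) (Fin n) ℂ := (B * K).map Complex.ofReal with hC
  set Λ : Matrix (Fin N) (Fin N) ℂ := T * H * T.conjTranspose with hΛ
  have hU : T * T.conjTranspose = 1 := by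
    have := Matrix.mem_unitaryGroup_iff.mp hT
    rwa [Matrix.star_eq_conjTranspose] at this
  have h1 : (kroneckerMap (· * ·) T (1 : Matrix (Fin n) (Fin n) ℂ)) *
      (kroneckerMap (· * ·) T.conjTranspose 1) = 1 := by
    rw [← Matrix.mul_kronecker_mul, hU, mul_one, Matrix.one_kronecker_one]
  -- key conjugation identity
  have hconj : ∀ μ : ℂ,
      (kroneckerMap (· * ·) T (1 : Matrix (Fin n) (Fin n) ℂ)) *
        (μ • 1 - (kroneckerMap (· * ·) 1 A' - kroneckerMap (· * ·) H C)) *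
        (kroneckerMap (· * ·) T.conjTranspose 1)
      = μ • 1 - (kroneckerMap (· * ·) 1 A' - kroneckerMap (· * ·) Λ C) := by
    intro μ
    rw [mul_sub, sub_mul, mul_sub, sub_mul, Matrix.mul_smul, Matrix.smul_mul, mul_one, h1]
    congr 1
    rw [← Matrix.mul_kronecker_mul, ← Matrix.mul_kronecker_mul,
        ← Matrix.mul_kronecker_mul, ← Matrix.mul_kronecker_mul]
    simp [hU, hΛ, Matrix.mul_assoc]
  -- determinants agree under unitary conjugation
  have hdet : ∀ μ : ℂ,
      (μ • (1 : Matrix (Fin N × Fin n) (Fin N × Fin n) ℂ)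
        - (kroneckerMap (· * ·) 1 A' - kroneckerMap (· * ·) H C)).det
      = (μ • (1 : Matrix (Fin N × Fin n) (Fin N × Fin n) ℂ)
        - (kroneckerMap (· * ·) 1 A' - kroneckerMap (· * ·) Λ C)).det := by
    intro μ
    have := congrArg Matrix.det (hconj μ)
    rw [Matrix.det_mul, Matrix.det_mul] at this
    rw [← this]
    have hd1 : (kroneckerMap (· * ·) T (1 : Matrix (Fin n) (Fin n) ℂ)).det *
        (kroneckerMap (· * ·) T.conjTranspose (1 : Matrix (Fin n) (Fin n) ℂ)).det = 1 := by
      rw [← Matrix.det_mul, h1, Matrix.det_one]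
    linear_combination (-((μ • (1 : Matrix (Fin N × Fin n) (Fin N × Fin n) ℂ)
        - (kroneckerMap (· * ·) 1 A' - kroneckerMap (· * ·) H C)).det)) * hd1
  -- the conjugated pencil is block upper triangular
  have hBT : ∀ μ : ℂ, (μ • (1 : Matrix (Fin N × Fin n) (Fin N × Fin n) ℂ)
      - (kroneckerMap (· * ·) 1 A' - kroneckerMap (· * ·) Λ C)).BlockTriangular Prod.fst := by
    intro μ x y hxy
    have hne : x.1 ≠ y.1 := ne_of_gt hxy
    have h0 : Λ x.1 y.1 = 0 := hTri hxy
    simp [Matrix.one_apply, hne, h0, Prod.ext_iff]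
  -- the diagonal blocks
  have hblock : ∀ (μ : ℂ) (i : Fin N),
      ((μ • (1 : Matrix (Fin N × Fin n) (Fin N × Fin n) ℂ)
        - (kroneckerMap (· * ·) 1 A' - kroneckerMap (· * ·) Λ C)).toSquareBlock Prod.fst i).det
      = (μ • (1 : Matrix (Fin n) (Fin n) ℂ) - (A' - Λ i i • C)).det := by
    intro μ i
    let e : Fin n ≃ {x : Fin N × Fin n // x.1 = i} :=
      ⟨fun a => ⟨(i, a), rfl⟩, fun x => x.1.2, fun a => rfl,
       fun x => by ext <;> simp [x.2.symm]⟩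
    rw [← Matrix.det_submatrix_equiv_self e]
    congr 1
    ext a b
    simp [Matrix.toSquareBlock_def, e, Matrix.one_apply, Prod.ext_iff, Matrix.submatrix_apply]
  -- spectrum characterization
  have key : ∀ μ : ℂ,
      μ ∈ spectrum ℂ (kroneckerMap (· * ·) (1 : Matrix (Fin N) (Fin N) ℂ) A'
          - kroneckerMap (· * ·) H C)
      ↔ ∃ i : Fin N, μ ∈ spectrum ℂ (A' - Λ i i • C) := by
    intro μ
    rw [spec_iff_det_aux, hdet μ, (hBT μ).det_fintype]
    simp_rw [hblock μ]
    rw [Finset.prod_eq_zero_iff]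
    simp_rw [spec_iff_det_aux]
    simp
  constructor
  · intro h i μ hμ
    exact h μ ((key μ).mpr ⟨i, hμ⟩)
  · intro h μ hμ
    obtain ⟨i, hi⟩ := (key μ).mp hμ
    exact h i μ hi
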